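/- arXiv:2512.14338 — 6 statements merged into one kernel-verified Lean document; each statement's English description precedes it below -/
import Mathlib

section
/- Let Γ be a subgroup of the group of n×n permutation matrices, let x₀ ∈ {0,1}ⁿ, let θ ∈ Ψ(Γ) be a Γ-invariant Hopfield parameter, and let δ ∈ ℝ. If E(x₀^{(j)}; θ) − E(x₀; θ) ≥ 1 − δ for all j ∈ {1,…,n}, then for every x in the orbit Orb(x₀, Γ) it also holds that E(x^{(j)}; θ) − E(x; θ) ≥ 1 − δ for all j ∈ {1,…,n}. -/
open scoped BigOperators
open scoped Classical
open Matrix MeasureTheory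

namespace HopfieldPaper

/-- The space of (not necessarily admissible) Hopfield parameters `θ = (W, b)`. -/
abbrev Param (n : ℕ) := Matrix (Fin n) (Fin n) ℝ × (Fin n → ℝ)

variable {n : ℕ}

/-- `θ = (W, b)` is a Hopfield parameter: `W` is symmetric with zero diagonal. -/
def IsHopfieldParam (θ : Param n) : Prop :=
  θ.1.IsSymm ∧ ∀ i, θ.1 i i = 0

/-- `x ∈ {0,1}ⁿ`. -/
def IsBinary (x : Fin n → ℝ) : Prop := ∀ i, x i = 0 ∨ x i = 1

/-- Energy `E(x; θ) = (1/2)·xᵀWx + bᵀx`. -/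
noncomputable def energy (x : Fin n → ℝ) (θ : Param n) : ℝ :=
  (1 / 2) * (∑ i, ∑ j, x i * θ.1 i j * x j) + ∑ j, θ.2 j * x j

/-- `x^{(j)}`: the vector differing from `x` exactly in coordinate `j`. -/
noncomputable def flip (x : Fin n → ℝ) (j : Fin n) : Fin n → ℝ :=
  Function.update x j (1 - x j)

/-- The inner product on parameter space.  Under the identification of
`θ = (W, b)` with `ω = (√2·a, b) ∈ ℝ^q` (`a` the strictly upper-triangular
entries of `W`), the Euclidean inner product on `ℝ^q` corresponds to
`⟨θ, η⟩ = Σᵢⱼ Wᵢⱼ·W'ᵢⱼ + Σⱼ bⱼ·b'ⱼ`; in particular `‖ω‖² = ‖W‖_F² + ‖b‖²`. -/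
noncomputable def pInner (θ η : Param n) : ℝ :=
  (∑ i, ∑ j, θ.1 i j * η.1 i j) + ∑ j, θ.2 j * η.2 j

/-- The norm on parameter space: `‖ω‖ = √(‖W‖_F² + ‖b‖²)`. -/
noncomputable def pNorm (θ : Param n) : ℝ := Real.sqrt (pInner θ θ)

/-- The representer `u_j(x)`: the unique element of parameter space with
`⟨u_j(x), θ⟩ = E(x^{(j)}; θ) − E(x; θ)` for every Hopfield parameter `θ`. -/
noncomputable def uvec (x : Fin n → ℝ) (j : Fin n) : Param n :=
  (Matrix.of fun i l =>
      if i = j ∧ l ≠ j then (1 - 2 * x j) * x l / 2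
      else if l = j ∧ i ≠ j then (1 - 2 * x j) * x i / 2
      else 0,
   fun l => if l = j then 1 - 2 * x j else 0)

/-- `‖x‖₀`: the number of nonzero coordinates. -/
noncomputable def l0norm (x : Fin n → ℝ) : ℕ :=
  (Finset.univ.filter fun i => x i ≠ 0).card

/-- Action of a permutation matrix `Q` on parameters: `Qθ := (QᵀWQ, Qᵀb)`. -/
noncomputable def permAct (σ : Equiv.Perm (Fin n)) (θ : Param n) : Param n :=
  ((σ.permMatrix ℝ)ᵀ * θ.1 * σ.permMatrix ℝ, ((σ.permMatrix ℝ)ᵀ).mulVec θ.2)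

/-- `θ ∈ Ψ(Γ)`: `θ` is invariant under (the permutation matrices of) `Γ`. -/
noncomputable def InvariantUnder (Γ : Set (Equiv.Perm (Fin n))) (θ : Param n) : Prop :=
  ∀ σ ∈ Γ, permAct σ θ = θ

/-- `Orb(x, Γ) = {Q·x : Q ∈ Γ}` (`Q` the permutation matrix of `σ ∈ Γ`). -/
noncomputable def orb (Γ : Set (Equiv.Perm (Fin n))) (x : Fin n → ℝ) :
    Set (Fin n → ℝ) :=
  {y | ∃ σ ∈ Γ, y = ((σ.permMatrix ℝ)).mulVec x}

lemma permMatrix_mulVec_eq (σ : Equiv.Perm (Fin n)) (x : Fin n → ℝ) :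
    (σ.permMatrix ℝ).mulVec x = fun i => x (σ i) := by
  funext i
  simp [Matrix.mulVec, dotProduct, Equiv.Perm.permMatrix,
    PEquiv.toMatrix_apply, Equiv.toPEquiv_apply, Finset.sum_ite_eq]

lemma permAct_W (σ : Equiv.Perm (Fin n)) (θ : Param n) (i l : Fin n) :
    (permAct σ θ).1 i l = θ.1 (σ.symm i) (σ.symm l) := by
  simp only [permAct, Matrix.mul_apply, Matrix.transpose_apply,
    Equiv.Perm.permMatrix, PEquiv.toMatrix_apply, Equiv.toPEquiv_apply,
    Option.mem_def, Option.some.injEq]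
  rw [Finset.sum_eq_single (σ.symm l)]
  · rw [Finset.sum_eq_single (σ.symm i)] <;> simp +contextual
    intro b hb; simp [Equiv.eq_symm_apply] at hb; simp [hb]
  · intro b _ hb
    have : ¬ (σ b = l) := fun hh => hb (by simp [← hh])
    simp [this]
  · simp

lemma permAct_b (σ : Equiv.Perm (Fin n)) (θ : Param n) (l : Fin n) :
    (permAct σ θ).2 l = θ.2 (σ.symm l) := by
  simp only [permAct, Matrix.mulVec, dotProduct, Matrix.transpose_apply,
    Equiv.Perm.permMatrix, PEquiv.toMatrix_apply, Equiv.toPEquiv_apply,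
    Option.mem_def, Option.some.injEq]
  rw [Finset.sum_eq_single (σ.symm l)] <;> simp +contextual [eq_comm]
  intro b hb; simp [eq_comm, Equiv.eq_symm_apply] at hb; simp [hb]

lemma energy_perm (σ : Equiv.Perm (Fin n)) (y : Fin n → ℝ) (θ : Param n) :
    energy (fun i => y (σ i)) θ = energy y (permAct σ θ) := by
  unfold energy
  congr 1
  · congr 1
    rw [← Equiv.sum_comp σ (fun i => ∑ l, y i * (permAct σ θ).1 i l * y l)]
    refine Finset.sum_congr rfl fun i _ => ?_
    rw [← Equiv.sum_comp σ (fun l => y (σ i) * (permAct σ θ).1 (σ i) l * y l)]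
    refine Finset.sum_congr rfl fun l _ => ?_
    rw [permAct_W]; simp
  · rw [← Equiv.sum_comp σ (fun l => (permAct σ θ).2 l * y l)]
    refine Finset.sum_congr rfl fun l _ => ?_
    rw [permAct_b]; simp

lemma flip_perm (σ : Equiv.Perm (Fin n)) (y : Fin n → ℝ) (j : Fin n) :
    flip (fun i => y (σ i)) j = fun i => flip y (σ j) (σ i) := by
  funext i
  unfold flip
  by_cases hij : i = j
  · subst hij; simp
  · rw [Function.update_of_ne hij, Function.update_of_ne (fun hh => hij (σ.injective hh))]

/-- If `θ ∈ Ψ(Γ)` and the energy gaps at `x₀` are at least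
`1 − δ`, then the same energy gaps hold at every point of `Orb(x₀, Γ)`. -/
theorem energy_gap_orbit {n : ℕ} (Γ : Subgroup (Equiv.Perm (Fin n)))
    (x₀ : Fin n → ℝ) (hx₀ : IsBinary x₀) (θ : Param n)
    (hθ : IsHopfieldParam θ)
    (hinv : InvariantUnder (Γ : Set (Equiv.Perm (Fin n))) θ) (δ : ℝ)
    (h : ∀ j : Fin n, energy (flip x₀ j) θ - energy x₀ θ ≥ 1 - δ) :
    ∀ x ∈ orb (Γ : Set (Equiv.Perm (Fin n))) x₀,
      ∀ j : Fin n, energy (flip x j) θ - energy x θ ≥ 1 - δ := by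
  rintro x ⟨σ, hσ, rfl⟩ j
  rw [permMatrix_mulVec_eq, flip_perm, energy_perm, energy_perm, hinv σ hσ]
  exact h (σ j)

end HopfieldPaper
end

section
/- The set of Hopfield parameters invariant under all edge-adjacency-preserving permutations is exactly the image of the linear map F: Ψ(Q_n) = F(ℝ³). That is, a parameter θ = (W,b) on n = v(v−1)/2 neurons satisfies Qθ = θ for every Q ∈ Q_n if and only if there exist β₁, β₂, β₃ ∈ ℝ with W_{ij} = 0 when i = j, W_{ij} = β₁ when i ∼ j, W_{ij} = β₂ when i ≠ j and i ≁ j, and b_j = β₃ for all j. -/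
/-!
Invariance under all adjacency-preserving permutations includes invariance under the edge
permutations induced by vertex permutations. Since `Perm (Fin v)` acts transitively on tuples of
distinct vertices, and an edge, a pair of adjacent edges and a pair of distinct non-adjacent edges
are spanned by two, three and four distinct vertices respectively, these induced permutations
already force `b` to be constant and `W` to be constant on adjacent and on non-adjacent pairs.
Conversely, the entries of `F(β)` depend only on equality and adjacency of the indices, which
adjacency-preserving permutations respect.
-/

open scoped BigOperators
open scoped Classical
open Matrix MeasureTheory

namespace HopfieldPaper

variable {n : ℕ}

variable {v : ℕ}

/-- The type of unordered pairs of distinct elements of `Fin v`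
(the "unordered pairs of `{1,…,v}`"). -/
abbrev EdgeIdx (v : ℕ) := {p : Sym2 (Fin v) // ¬ p.IsDiag}

/-- The permutation of `Sym2 (Fin v)` induced by a vertex permutation. -/
def sym2Perm (φ : Equiv.Perm (Fin v)) : Equiv.Perm (Sym2 (Fin v)) where
  toFun := Sym2.map φ
  invFun := Sym2.map φ.symm
  left_inv := fun p => by rw [Sym2.map_map]; simp
  right_inv := fun p => by rw [Sym2.map_map]; simp

/-- The induced permutation of unordered pairs of distinct vertices. -/
def offDiagPerm (φ : Equiv.Perm (Fin v)) : Equiv.Perm (EdgeIdx v) :=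
  (sym2Perm φ).subtypePerm (fun p => by
    simp only [sym2Perm, Equiv.coe_fn_mk]
    exact (Sym2.isDiag_map φ.injective).not)

/-- The edge permutation `π_φ` of `{1,…,n}` induced by the vertex permutation
`φ`; it satisfies `π_φ(Ind({a,b})) = Ind({φ(a),φ(b)})`. -/
def edgePerm (Ind : EdgeIdx v ≃ Fin n) (φ : Equiv.Perm (Fin v)) :
    Equiv.Perm (Fin n) :=
  Ind.permCongr (offDiagPerm φ)

/-- `Φ_n`: the set of permutation matrices of vertex-induced edge permutations. -/
noncomputable def PhiSet (Ind : EdgeIdx v ≃ Fin n) :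
    Set (Matrix (Fin n) (Fin n) ℝ) :=
  {P | ∃ φ : Equiv.Perm (Fin v), P = (edgePerm Ind φ).permMatrix ℝ}

/-- The two-element vertex set `Ind⁻¹(j)` of an edge index, as a `Finset`. -/
noncomputable def pairFinset (Ind : EdgeIdx v ≃ Fin n) (j : Fin n) : Finset (Fin v) :=
  Finset.univ.filter (fun a => a ∈ (Ind.symm j : Sym2 (Fin v)))

/-- Edge adjacency: `j ∼ l` iff `|Ind⁻¹(j) ∩ Ind⁻¹(l)| = 1`. -/
noncomputable def edgeAdj (Ind : EdgeIdx v ≃ Fin n) (j l : Fin n) : Prop :=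
  (pairFinset Ind j ∩ pairFinset Ind l).card = 1

/-- A permutation of edge indices preserves edge adjacency. -/
noncomputable def PreservesEdgeAdj (Ind : EdgeIdx v ≃ Fin n)
    (π : Equiv.Perm (Fin n)) : Prop :=
  ∀ j l : Fin n, edgeAdj Ind (π j) (π l) ↔ edgeAdj Ind j l

/-- `Q_n`: the set of permutation matrices of edge-adjacency-preserving
permutations. -/
noncomputable def QSet (Ind : EdgeIdx v ≃ Fin n) :
    Set (Matrix (Fin n) (Fin n) ℝ) :=
  {Q | ∃ π : Equiv.Perm (Fin n), PreservesEdgeAdj Ind π ∧ Q = π.permMatrix ℝ}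

/-- Orbit of a vector under a set of matrices: `Orb(x, Γ) = {P·x : P ∈ Γ}`. -/
noncomputable def morb (Γ : Set (Matrix (Fin n) (Fin n) ℝ)) (x : Fin n → ℝ) :
    Set (Fin n → ℝ) :=
  {y | ∃ P ∈ Γ, y = P.mulVec x}

/-- The linear map `F : ℝ³ → Θ` sending `β` to `(W, b)` with `W_{ij} = 0` if
`i = j`, `W_{ij} = β₁` if `i ∼ j`, `W_{ij} = β₂` if `i ≠ j` and `i ≁ j`, and
`b_j = β₃`. -/
noncomputable def Fmap (Ind : EdgeIdx v ≃ Fin n) (β : ℝ × ℝ × ℝ) : Param n :=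
  (Matrix.of fun i j =>
      if i = j then 0 else if edgeAdj Ind i j then β.1 else β.2.1,
   fun _ => β.2.2)

lemma exists_perm_map_eq_of_nodup {α : Type*} {l l' : List α} (hl : l.Nodup) (hl' : l'.Nodup)
    (hlen : l.length = l'.length) : ∃ σ : Equiv.Perm α, l.map σ = l' := by
  obtain ⟨σ, hσ⟩ := Equiv.Perm.exists_extending_pair l.get (l'.get ∘ Fin.cast hlen)
    (List.nodup_iff_injective_get.1 hl)
    ((List.nodup_iff_injective_get.1 hl').comp (Fin.cast_injective hlen))
  refine ⟨σ, List.ext_get (by simpa using hlen) fun i h₁ _ => ?_⟩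
  simpa using hσ ⟨i, by simpa using h₁⟩

lemma exists_forall_eq_of_pairwise_eq {ι α : Type*} [Nonempty α] {p : ι → Prop} {f : ι → α}
    (h : ∀ i j, p i → p j → f i = f j) : ∃ c, ∀ i, p i → f i = c := by
  by_cases hp : ∃ i, p i
  · obtain ⟨i, hi⟩ := hp
    exact ⟨f i, fun j hj => h j i hj hi⟩
  · exact ⟨Classical.arbitrary α, fun i hi => (hp ⟨i, hi⟩).elim⟩

lemma permAct_eq (σ : Equiv.Perm (Fin n)) (θ : Param n) :
    permAct σ θ = (θ.1.submatrix ⇑σ⁻¹ ⇑σ⁻¹, θ.2 ∘ ⇑σ⁻¹) := by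
  rw [permAct, transpose_permMatrix, Equiv.Perm.permMatrix, Equiv.Perm.permMatrix,
    PEquiv.toMatrix_toPEquiv_mul, PEquiv.mul_toMatrix_toPEquiv, PEquiv.toMatrix_toPEquiv_mulVec]
  rfl

lemma permAct_eq_self_iff {σ : Equiv.Perm (Fin n)} {θ : Param n} :
    permAct σ θ = θ ↔ (∀ i j, θ.1 (σ i) (σ j) = θ.1 i j) ∧ ∀ i, θ.2 (σ i) = θ.2 i := by
  rw [permAct_eq, Prod.ext_iff, ← Matrix.ext_iff, funext_iff]
  constructor
  · rintro ⟨hW, hb⟩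
    exact ⟨fun i j => by simpa using (hW (σ i) (σ j)).symm,
      fun i => by simpa using (hb (σ i)).symm⟩
  · rintro ⟨hW, hb⟩
    exact ⟨fun i j => by simpa using (hW (σ⁻¹ i) (σ⁻¹ j)).symm,
      fun i => by simpa using (hb (σ⁻¹ i)).symm⟩

section Edges

variable (Ind : EdgeIdx v ≃ Fin n)

lemma mem_pairFinset {j : Fin n} {a : Fin v} :
    a ∈ pairFinset Ind j ↔ a ∈ (Ind.symm j : Sym2 (Fin v)) := by
  simp [pairFinset]

lemma ne_of_symm_eq_mk {j : Fin n} {a b : Fin v} (h : (Ind.symm j : Sym2 (Fin v)) = s(a, b)) :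
    a ≠ b :=
  fun hab => (Ind.symm j).2 (h ▸ Sym2.mk_isDiag_iff.2 hab)

lemma exists_nodup_symm_eq_mk (j : Fin n) :
    ∃ a b : Fin v, [a, b].Nodup ∧ (Ind.symm j : Sym2 (Fin v)) = s(a, b) := by
  obtain ⟨⟨a, b⟩, h⟩ := Quot.exists_rep (Ind.symm j : Sym2 (Fin v))
  exact ⟨a, b, by simpa using ne_of_symm_eq_mk Ind h.symm, h.symm⟩

lemma eq_of_two_shared_vertices {j l : Fin n} {a b : Fin v} (hab : a ≠ b)
    (hj : a ∈ (Ind.symm j : Sym2 (Fin v)) ∧ b ∈ (Ind.symm j : Sym2 (Fin v)))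
    (hl : a ∈ (Ind.symm l : Sym2 (Fin v)) ∧ b ∈ (Ind.symm l : Sym2 (Fin v))) : j = l :=
  Ind.symm.injective <| Subtype.ext <|
    ((Sym2.mem_and_mem_iff hab).1 hj).trans ((Sym2.mem_and_mem_iff hab).1 hl).symm

lemma card_inter_pairFinset_le_one {j l : Fin n} (hjl : j ≠ l) :
    (pairFinset Ind j ∩ pairFinset Ind l).card ≤ 1 := by
  refine Finset.card_le_one.2 fun a ha b hb => by_contra fun hab => hjl ?_
  simp only [Finset.mem_inter, mem_pairFinset] at ha hb
  exact eq_of_two_shared_vertices Ind hab ⟨ha.1, hb.1⟩ ⟨ha.2, hb.2⟩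

lemma exists_nodup_of_edgeAdj {j l : Fin n} (h : edgeAdj Ind j l) :
    ∃ a b c : Fin v, [a, b, c].Nodup ∧ (Ind.symm j : Sym2 (Fin v)) = s(a, b) ∧
      (Ind.symm l : Sym2 (Fin v)) = s(a, c) := by
  obtain ⟨a, ha⟩ := Finset.card_eq_one.1 h
  have hmem : ∀ x, x ∈ (Ind.symm j : Sym2 (Fin v)) ∧ x ∈ (Ind.symm l : Sym2 (Fin v)) ↔ x = a :=
    fun x => by simpa [mem_pairFinset] using Finset.ext_iff.1 ha x
  obtain ⟨b, hb⟩ := Sym2.mem_iff_exists.1 ((hmem a).2 rfl).1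
  obtain ⟨c, hc⟩ := Sym2.mem_iff_exists.1 ((hmem a).2 rfl).2
  refine ⟨a, b, c, ?_, hb, hc⟩
  have hbc : b ≠ c := fun hbc => ne_of_symm_eq_mk Ind hb
    ((hmem b).1 ⟨hb ▸ Sym2.mem_mk_right a b, hbc ▸ hc ▸ Sym2.mem_mk_right a c⟩).symm
  simp [ne_of_symm_eq_mk Ind hb, ne_of_symm_eq_mk Ind hc, hbc]

lemma exists_nodup_of_not_edgeAdj {j l : Fin n} (hjl : j ≠ l) (h : ¬ edgeAdj Ind j l) :
    ∃ a b c d : Fin v, [a, b, c, d].Nodup ∧ (Ind.symm j : Sym2 (Fin v)) = s(a, b) ∧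
      (Ind.symm l : Sym2 (Fin v)) = s(c, d) := by
  have hempty : pairFinset Ind j ∩ pairFinset Ind l = ∅ := by
    have := card_inter_pairFinset_le_one Ind hjl
    unfold edgeAdj at h
    exact Finset.card_eq_zero.1 (by omega)
  have hdisj : ∀ x ∈ (Ind.symm j : Sym2 (Fin v)), ∀ y ∈ (Ind.symm l : Sym2 (Fin v)), x ≠ y := by
    rintro x hx _ hy rfl
    exact Finset.notMem_empty x
      (hempty ▸ Finset.mem_inter.2 ⟨(mem_pairFinset Ind).2 hx, (mem_pairFinset Ind).2 hy⟩)
  obtain ⟨a, b, hab, hj⟩ := exists_nodup_symm_eq_mk Ind j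
  obtain ⟨c, d, hcd, hl⟩ := exists_nodup_symm_eq_mk Ind l
  refine ⟨a, b, c, d, ?_, hj, hl⟩
  rw [hj, hl] at hdisj
  simp only [Sym2.mem_iff, forall_eq_or_imp, forall_eq] at hdisj
  simp_all

lemma coe_symm_edgePerm_apply (φ : Equiv.Perm (Fin v)) (j : Fin n) :
    (Ind.symm (edgePerm Ind φ j) : Sym2 (Fin v)) = (Ind.symm j : Sym2 (Fin v)).map φ := by
  simp only [edgePerm, Equiv.permCongr_apply, Equiv.symm_apply_apply]
  rfl

lemma edgePerm_apply_eq_of_symm_eq_mk (φ : Equiv.Perm (Fin v)) {j j' : Fin n} {a b : Fin v}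
    (hj : (Ind.symm j : Sym2 (Fin v)) = s(a, b))
    (hj' : (Ind.symm j' : Sym2 (Fin v)) = s(φ a, φ b)) : edgePerm Ind φ j = j' :=
  Ind.symm.injective <| Subtype.ext <| by
    rw [coe_symm_edgePerm_apply, hj, hj', Sym2.map_mk]

lemma pairFinset_edgePerm (φ : Equiv.Perm (Fin v)) (j : Fin n) :
    pairFinset Ind (edgePerm Ind φ j) = (pairFinset Ind j).map φ.toEmbedding := by
  ext x
  simp [mem_pairFinset, coe_symm_edgePerm_apply, Sym2.mem_map, ← Equiv.eq_symm_apply]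

lemma preservesEdgeAdj_edgePerm (φ : Equiv.Perm (Fin v)) :
    PreservesEdgeAdj Ind (edgePerm Ind φ) := by
  intro j l
  rw [edgeAdj, edgeAdj, pairFinset_edgePerm, pairFinset_edgePerm, ← Finset.map_inter,
    Finset.card_map]

lemma exists_edgePerm_apply_eq (j j' : Fin n) :
    ∃ φ : Equiv.Perm (Fin v), edgePerm Ind φ j = j' := by
  obtain ⟨a, b, hab, hj⟩ := exists_nodup_symm_eq_mk Ind j
  obtain ⟨a', b', hab', hj'⟩ := exists_nodup_symm_eq_mk Ind j'
  obtain ⟨φ, hφ⟩ := exists_perm_map_eq_of_nodup hab hab' rfl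
  simp only [List.map_cons, List.map_nil, List.cons.injEq, and_true] at hφ
  exact ⟨φ, edgePerm_apply_eq_of_symm_eq_mk Ind φ hj (by rw [hj', hφ.1, hφ.2])⟩

lemma exists_edgePerm_apply_eq_pair {j l j' l' : Fin n} (hjl : j ≠ l) (hjl' : j' ≠ l')
    (hadj : edgeAdj Ind j l ↔ edgeAdj Ind j' l') :
    ∃ φ : Equiv.Perm (Fin v), edgePerm Ind φ j = j' ∧ edgePerm Ind φ l = l' := by
  by_cases h : edgeAdj Ind j l
  · obtain ⟨a, b, c, habc, hj, hl⟩ := exists_nodup_of_edgeAdj Ind h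
    obtain ⟨a', b', c', habc', hj', hl'⟩ := exists_nodup_of_edgeAdj Ind (hadj.1 h)
    obtain ⟨φ, hφ⟩ := exists_perm_map_eq_of_nodup habc habc' rfl
    simp only [List.map_cons, List.map_nil, List.cons.injEq, and_true] at hφ
    exact ⟨φ, edgePerm_apply_eq_of_symm_eq_mk Ind φ hj (by rw [hj', hφ.1, hφ.2.1]),
      edgePerm_apply_eq_of_symm_eq_mk Ind φ hl (by rw [hl', hφ.1, hφ.2.2])⟩
  · obtain ⟨a, b, c, d, habcd, hj, hl⟩ := exists_nodup_of_not_edgeAdj Ind hjl h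
    obtain ⟨a', b', c', d', habcd', hj', hl'⟩ :=
      exists_nodup_of_not_edgeAdj Ind hjl' (mt hadj.2 h)
    obtain ⟨φ, hφ⟩ := exists_perm_map_eq_of_nodup habcd habcd' rfl
    simp only [List.map_cons, List.map_nil, List.cons.injEq, and_true] at hφ
    exact ⟨φ, edgePerm_apply_eq_of_symm_eq_mk Ind φ hj (by rw [hj', hφ.1, hφ.2.1]),
      edgePerm_apply_eq_of_symm_eq_mk Ind φ hl (by rw [hl', hφ.2.2.1, hφ.2.2.2])⟩

end Edges

section Invariance

variable {Ind : EdgeIdx v ≃ Fin n} {θ : Param n}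

lemma permAct_Fmap {π : Equiv.Perm (Fin n)} (hπ : PreservesEdgeAdj Ind π) (β : ℝ × ℝ × ℝ) :
    permAct π (Fmap Ind β) = Fmap Ind β :=
  permAct_eq_self_iff.2 ⟨fun i j => by simp [Fmap, hπ i j, π.injective.eq_iff], fun _ => rfl⟩

lemma exists_eq_Fmap_of_forall_edgePerm (hdiag : ∀ i, θ.1 i i = 0)
    (h : ∀ φ : Equiv.Perm (Fin v), permAct (edgePerm Ind φ) θ = θ) :
    ∃ β : ℝ × ℝ × ℝ, θ = Fmap Ind β := by
  have hpair : ∀ j l j' l', j ≠ l → j' ≠ l' → (edgeAdj Ind j l ↔ edgeAdj Ind j' l') →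
      θ.1 j l = θ.1 j' l' := fun j l j' l' hjl hjl' hadj => by
    obtain ⟨φ, rfl, rfl⟩ := exists_edgePerm_apply_eq_pair Ind hjl hjl' hadj
    exact ((permAct_eq_self_iff.1 (h φ)).1 j l).symm
  obtain ⟨β₁, hβ₁⟩ := exists_forall_eq_of_pairwise_eq
    (p := fun q : Fin n × Fin n => q.1 ≠ q.2 ∧ edgeAdj Ind q.1 q.2) (f := fun q => θ.1 q.1 q.2)
    fun q q' hq hq' => hpair _ _ _ _ hq.1 hq'.1 (iff_of_true hq.2 hq'.2)
  obtain ⟨β₂, hβ₂⟩ := exists_forall_eq_of_pairwise_eq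
    (p := fun q : Fin n × Fin n => q.1 ≠ q.2 ∧ ¬ edgeAdj Ind q.1 q.2) (f := fun q => θ.1 q.1 q.2)
    fun q q' hq hq' => hpair _ _ _ _ hq.1 hq'.1 (iff_of_false hq.2 hq'.2)
  obtain ⟨β₃, hβ₃⟩ := exists_forall_eq_of_pairwise_eq (p := fun _ : Fin n => True) (f := θ.2)
    fun j j' _ _ => by
      obtain ⟨φ, rfl⟩ := exists_edgePerm_apply_eq Ind j' j
      exact (permAct_eq_self_iff.1 (h φ)).2 j'
  refine ⟨(β₁, β₂, β₃), Prod.ext (Matrix.ext fun i j => ?_) (funext fun j => hβ₃ j trivial)⟩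
  by_cases hij : i = j
  · simp [Fmap, hij, hdiag]
  by_cases hadj : edgeAdj Ind i j
  · simpa [Fmap, hij, hadj] using hβ₁ (i, j) ⟨hij, hadj⟩
  · simpa [Fmap, hij, hadj] using hβ₂ (i, j) ⟨hij, hadj⟩

end Invariance

theorem invariant_iff_Fmap_general {v n : ℕ} (Ind : EdgeIdx v ≃ Fin n)
    (θ : Param n) (hθ : IsHopfieldParam θ) :
    (∀ π : Equiv.Perm (Fin n), PreservesEdgeAdj Ind π → permAct π θ = θ) ↔
    (∃ β : ℝ × ℝ × ℝ, θ = Fmap Ind β) := by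
  constructor
  · exact fun h => exists_eq_Fmap_of_forall_edgePerm hθ.2
      fun φ => h _ (preservesEdgeAdj_edgePerm Ind φ)
  · rintro ⟨β, rfl⟩ π hπ
    exact permAct_Fmap hπ β

/-- `Ψ(Q_n) = F(ℝ³)`: a Hopfield parameter is invariant under
all edge-adjacency-preserving permutations iff it is of the form `F(β)`. -/
theorem invariant_iff_Fmap {v n : ℕ} (hv : 2 ≤ v) (Ind : EdgeIdx v ≃ Fin n)
    (θ : Param n) (hθ : IsHopfieldParam θ) :
    (∀ π : Equiv.Perm (Fin n), PreservesEdgeAdj Ind π → permAct π θ = θ) ↔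
    (∃ β : ℝ × ℝ × ℝ, θ = Fmap Ind β) :=
  invariant_iff_Fmap_general Ind θ hθ

end HopfieldPaper
end

section
/- For any integer m with 0 ≤ m ≤ n, let θ = F(β) with β = (2, 2, 1 − 2m). Then for every x ∈ {0,1}ⁿ with ‖x‖₀ = m and every j ∈ {1,…,n}, the energy difference satisfies E(x^{(j)}; θ) − E(x; θ) ≥ 1. -/
open scoped BigOperators
open scoped Classical
open Matrix MeasureTheory

namespace HopfieldPaper

variable {n : ℕ}

variable {v : ℕ}

-- `F(a, a, c)` has `W = a (J − I)`, whatever the adjacency structure.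
theorem energy_Fmap_of_eq (Ind : EdgeIdx v ≃ Fin n) (a c : ℝ) (x : Fin n → ℝ) :
    energy x (Fmap Ind (a, a, c)) =
      a / 2 * ((∑ i, x i) ^ 2 - ∑ i, x i ^ 2) + c * ∑ i, x i := by
  have hterm : ∀ i l, x i * (Fmap Ind (a, a, c)).1 i l * x l =
      a * (x i * x l) - if i = l then a * x i ^ 2 else 0 := by
    intro i l
    simp only [Fmap, Matrix.of_apply]
    split_ifs with h
    · subst h; ring
    all_goals ring
  have hquad : ∑ i, ∑ l, x i * (Fmap Ind (a, a, c)).1 i l * x l =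
      a * ((∑ i, x i) ^ 2 - ∑ i, x i ^ 2) := by
    simp only [hterm, Finset.sum_sub_distrib, Finset.sum_ite_eq, Finset.mem_univ, if_true,
      ← Finset.mul_sum, sq (∑ i, x i), Finset.sum_mul_sum, mul_sub]
  rw [energy, hquad]
  simp only [Fmap, Finset.mul_sum]
  ring

namespace IsBinary

variable {x : Fin n → ℝ}

theorem sq_eq (hx : IsBinary x) (i : Fin n) : x i ^ 2 = x i := by
  rcases hx i with h | h <;> simp [h]

theorem sum_eq_l0norm (hx : IsBinary x) : ∑ i, x i = l0norm x := by
  rw [l0norm, Finset.card_eq_sum_ones, Nat.cast_sum, ← Finset.sum_filter_ne_zero]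
  refine Finset.sum_congr rfl fun i hi => ?_
  rcases hx i with h | h
  · exact absurd h (Finset.mem_filter.mp hi).2
  · simp [h]

theorem flip (hx : IsBinary x) (j : Fin n) : IsBinary (flip x j) := by
  intro i
  by_cases h : i = j
  · subst h
    rcases hx i with h | h <;> simp [HopfieldPaper.flip, h]
  · simpa [HopfieldPaper.flip, h] using hx i

theorem one_sub_two_mul_sq (hx : IsBinary x) (j : Fin n) : (1 - 2 * x j) ^ 2 = 1 := by
  rcases hx j with h | h <;> norm_num [h]

end IsBinary

theorem sum_flip (x : Fin n → ℝ) (j : Fin n) :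
    ∑ i, flip x j i = ∑ i, x i + (1 - 2 * x j) := by
  rw [flip, Finset.sum_update_of_mem (Finset.mem_univ j), Finset.sdiff_singleton_eq_erase,
    Finset.sum_erase_eq_sub (Finset.mem_univ j)]
  ring

-- Completing the square: a flip moves `Σ xᵢ` by `±1`, so from `Σ xᵢ = m` the energy
-- rises by exactly 1.
theorem energy_Fmap_sparsity (Ind : EdgeIdx v ≃ Fin n) (m : ℝ) {x : Fin n → ℝ}
    (hx : IsBinary x) :
    energy x (Fmap Ind (2, 2, 1 - 2 * m)) = (∑ i, x i - m) ^ 2 - m ^ 2 := by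
  rw [energy_Fmap_of_eq, Finset.sum_congr rfl fun i _ => hx.sq_eq i]
  ring

theorem Fmap_memorizes_sparsity_general {v n : ℕ}
    (Ind : EdgeIdx v ≃ Fin n) (m : ℕ) (x : Fin n → ℝ)
    (hx : IsBinary x) (hx0 : l0norm x = m) (j : Fin n) :
    energy (flip x j) (Fmap Ind (2, 2, 1 - 2 * (m : ℝ)))
      - energy x (Fmap Ind (2, 2, 1 - 2 * (m : ℝ))) ≥ 1 := by
  have hsum : ∑ i, x i = m := by rw [hx.sum_eq_l0norm, hx0]
  rw [energy_Fmap_sparsity Ind _ (hx.flip j), energy_Fmap_sparsity Ind _ hx, sum_flip, hsum,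
    add_sub_cancel_left, sub_self, hx.one_sub_two_mul_sq]
  norm_num

/-- With `θ = F(2, 2, 1 − 2m)`, every binary `x` with
`‖x‖₀ = m` has all energy gaps at least 1. -/
theorem Fmap_memorizes_sparsity {v n : ℕ} (hv : 2 ≤ v)
    (Ind : EdgeIdx v ≃ Fin n) (m : ℕ) (hm : m ≤ n) (x : Fin n → ℝ)
    (hx : IsBinary x) (hx0 : l0norm x = m) (j : Fin n) :
    energy (flip x j) (Fmap Ind (2, 2, 1 - 2 * (m : ℝ)))
      - energy x (Fmap Ind (2, 2, 1 - 2 * (m : ℝ))) ≥ 1 :=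
  Fmap_memorizes_sparsity_general Ind m x hx hx0 j

end HopfieldPaper
end

section
/- Let k, v be integers with 16 ≤ k ≤ v, and let θ = F(β) with β = (−5/k, 14/k², 0). Then: (1) E(x^{(j)}; θ) − E(x; θ) ≥ 1 for every edge representation x ∈ C_{v,k} of a k-clique graph and every j ∈ {1,…,n}; and (2) if moreover k = c·v for a constant c ∈ (0,1], then ‖θ‖² ≤ (196·c⁻⁴ + 50·c⁻²)·v, where ‖θ‖² = ‖W‖_F² + ‖b‖². -/
open scoped BigOperators
open scoped Classical
open Matrix MeasureTheory

namespace HopfieldPaper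

variable {n : ℕ}

variable {v : ℕ}

/-- The edge representation of the clique graph on the vertex set `K`. -/
noncomputable def cliqueRep (Ind : EdgeIdx v ≃ Fin n) (K : Finset (Fin v)) :
    Fin n → ℝ :=
  fun j => if (∀ a ∈ (Ind.symm j : Sym2 (Fin v)), a ∈ K) then 1 else 0

/-- `C_{v,k}`: edge representations of `k`-clique graphs on `v` vertices. -/
noncomputable def CliqueReps (Ind : EdgeIdx v ≃ Fin n) (k : ℕ) :
    Set (Fin n → ℝ) :=
  {x | ∃ K : Finset (Fin v), K.card = k ∧ x = cliqueRep Ind K}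

/-! Flipping coordinate `j` of `x` changes the energy by `(1 - 2 x_j) ((W x)_j + b_j)`. When
`x` is the clique on a `k`-set `K` and `θ = F(β₁, β₂, 0)`, the sum `(W x)_j` only depends on the
number `m ∈ {0, 1, 2}` of endpoints of the edge `j` lying in `K`: the clique has `k.choose 2`
edges, of which exactly `m (k - m)` are adjacent to `j`. The gap is then an explicit rational
function of `k` in each of the three cases, and it is at least `1` as soon as `k ≥ 16` (the
binding case is `m = 1`, where the condition is `k² - 16 k + 14 ≥ 0`). For the norm, the same
count with `K` the full vertex set shows that every row of `W` has exactly `2 (v - 2)` entries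
`β₁` and `n - 1 - 2 (v - 2)` entries `β₂`, which gives `‖θ‖²` in closed form. -/

lemma energy_eq_dotProduct (x : Fin n → ℝ) (θ : Param n) :
    energy x θ = 1 / 2 * (x ⬝ᵥ θ.1 *ᵥ x) + θ.2 ⬝ᵥ x := by
  simp only [energy, dotProduct, mulVec, Finset.mul_sum, mul_assoc]

lemma flip_eq_add_single (x : Fin n → ℝ) (j : Fin n) :
    flip x j = x + Pi.single j (1 - 2 * x j) := by
  ext i
  rcases eq_or_ne i j with rfl | h
  · simp only [flip, Function.update_self, Pi.add_apply, Pi.single_eq_same]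
    ring
  · simp [flip, h]

theorem energy_flip_sub_energy {θ : Param n} (hθ : IsHopfieldParam θ) (x : Fin n → ℝ)
    (j : Fin n) :
    energy (flip x j) θ - energy x θ = (1 - 2 * x j) * ((θ.1 *ᵥ x) j + θ.2 j) := by
  obtain ⟨hsymm, hdiag⟩ := hθ
  set s : Fin n → ℝ := Pi.single j (1 - 2 * x j)
  have hxs : x ⬝ᵥ θ.1 *ᵥ s = (θ.1 *ᵥ x) j * (1 - 2 * x j) := by
    rw [dotProduct_mulVec, ← vecMul_transpose, hsymm.eq, dotProduct_single]
  have hss : s ⬝ᵥ θ.1 *ᵥ s = 0 := by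
    simp [s, single_dotProduct, mulVec_single, hdiag]
  rw [energy_eq_dotProduct, energy_eq_dotProduct, flip_eq_add_single, mulVec_add,
    dotProduct_add, add_dotProduct, add_dotProduct, hxs, hss, single_dotProduct,
    dotProduct_add, dotProduct_single]
  ring

open Finset in
theorem _root_.Finset.card_filter_powersetCard_two_card_inter_eq_one {α : Type*}
    [DecidableEq α] (p K : Finset α) :
    #{e ∈ K.powersetCard 2 | #(p ∩ e) = 1} = #(p ∩ K) * #(K \ p) := by
  have pair_split : ∀ {s t : α}, s ∈ p → t ∉ p →
      p ∩ {s, t} = {s} ∧ ({s, t} : Finset α) \ p = {t} := by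
    intro s t hs ht
    constructor <;> ext u <;> simp only [mem_inter, mem_insert, mem_singleton, mem_sdiff] <;> grind
  rw [← card_product]
  symm
  refine card_bij (fun st _ => {st.1, st.2}) ?_ ?_ ?_
  · rintro ⟨s, t⟩ hst
    simp only [mem_product, mem_inter, mem_sdiff] at hst
    obtain ⟨⟨hsp, hsK⟩, htK, htp⟩ := hst
    have hne : s ≠ t := by
      rintro rfl
      exact htp hsp
    simp [mem_powersetCard, insert_subset_iff, hsK, htK, card_pair hne, (pair_split hsp htp).1]
  · rintro ⟨s, t⟩ hst ⟨s', t'⟩ hst' h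
    simp only [mem_product, mem_inter, mem_sdiff] at hst hst'
    obtain ⟨hinter, hsdiff⟩ := pair_split hst.1.1 hst.2.2
    obtain ⟨hinter', hsdiff'⟩ := pair_split hst'.1.1 hst'.2.2
    have h₁ := congrArg (p ∩ ·) h
    have h₂ := congrArg (· \ p) h
    simp only [hinter, hinter', hsdiff, hsdiff', singleton_inj] at h₁ h₂
    simp [h₁, h₂]
  · intro e he
    simp only [mem_filter, mem_powersetCard] at he
    obtain ⟨⟨heK, he2⟩, hpe⟩ := he
    obtain ⟨s, hs⟩ := card_eq_one.1 hpe
    have hep : #(e \ p) = 1 := by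
      have := card_sdiff_add_card_inter e p
      rw [inter_comm, hpe, he2] at this
      omega
    obtain ⟨t, ht⟩ := card_eq_one.1 hep
    have hsmem : s ∈ p ∩ e := by simp [hs]
    have htmem : t ∈ e \ p := by simp [ht]
    refine ⟨(s, t), ?_, ?_⟩
    · simp only [mem_inter, mem_sdiff] at hsmem htmem
      simp [hsmem.1, heK hsmem.2, heK htmem.1, htmem.2]
    · rw [← sdiff_union_inter e p, inter_comm, hs, ht, union_comm, ← insert_eq]

section Edges

open Finset

variable (Ind : EdgeIdx v ≃ Fin n)

lemma pairFinset_eq_toFinset (j : Fin n) :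
    pairFinset Ind j = (Ind.symm j : Sym2 (Fin v)).toFinset := by
  ext a
  simp [pairFinset]

lemma card_pairFinset (j : Fin n) : #(pairFinset Ind j) = 2 := by
  rw [pairFinset_eq_toFinset]
  exact Sym2.card_toFinset_of_not_isDiag _ (Ind.symm j).2

lemma pairFinset_injective : Function.Injective (pairFinset Ind) := by
  intro j l h
  simp only [pairFinset_eq_toFinset] at h
  apply Ind.symm.injective
  ext a
  simpa using congrArg (a ∈ ·) h

lemma exists_pairFinset_eq {e : Finset (Fin v)} (he : #e = 2) : ∃ j, pairFinset Ind j = e := by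
  obtain ⟨a, b, hab, rfl⟩ := card_eq_two.1 he
  exact ⟨Ind ⟨s(a, b), by simpa using hab⟩,
    by simp [pairFinset_eq_toFinset, Sym2.toFinset_mk_eq]⟩

lemma card_filter_pairFinset (P : Finset (Fin v) → Prop) [DecidablePred P] :
    #{j | P (pairFinset Ind j)} = #{e ∈ univ.powersetCard 2 | P e} := by
  refine card_nbij (pairFinset Ind) ?_ (pairFinset_injective Ind).injOn ?_
  · intro j hj
    simp_all [card_pairFinset]
  · intro e he
    simp only [coe_filter, mem_powersetCard_univ, Set.mem_ofPred_eq] at he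
    obtain ⟨j, rfl⟩ := exists_pairFinset_eq Ind he.1
    exact ⟨j, by simpa using he.2, rfl⟩

lemma card_filter_pairFinset_subset (K : Finset (Fin v)) :
    #{j | pairFinset Ind j ⊆ K} = (#K).choose 2 := by
  refine (card_filter_pairFinset Ind (· ⊆ K)).trans ?_
  rw [← card_powersetCard]
  congr 1
  ext e
  simp [mem_powersetCard, and_comm]

lemma card_filter_pairFinset_subset_edgeAdj (K : Finset (Fin v)) (j : Fin n) :
    #{l | pairFinset Ind l ⊆ K ∧ edgeAdj Ind j l} =
      #(pairFinset Ind j ∩ K) * #(K \ pairFinset Ind j) := by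
  rw [← card_filter_powersetCard_two_card_inter_eq_one]
  convert card_filter_pairFinset Ind (fun e => e ⊆ K ∧ #(pairFinset Ind j ∩ e) = 1) using 2
  · ext l
    simp only [mem_filter]
    rfl
  · ext e
    simp only [mem_filter, mem_powersetCard, subset_univ, true_and]
    tauto

lemma eq_choose_two_of_equiv (e : EdgeIdx v ≃ Fin n) : n = v.choose 2 := by
  simpa using card_filter_pairFinset_subset e univ

lemma card_filter_edgeAdj (j : Fin n) : #{l | edgeAdj Ind j l} = 2 * (v - 2) := by
  simpa [card_pairFinset, card_univ_sdiff] using card_filter_pairFinset_subset_edgeAdj Ind univ j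

lemma edgeAdj_comm (j l : Fin n) : edgeAdj Ind j l ↔ edgeAdj Ind l j := by
  rw [edgeAdj, edgeAdj, inter_comm]

lemma not_edgeAdj_self (j : Fin n) : ¬ edgeAdj Ind j j := by
  simp [edgeAdj, card_pairFinset]

lemma Fmap_isHopfieldParam (β : ℝ × ℝ × ℝ) : IsHopfieldParam (Fmap Ind β) := by
  refine ⟨IsSymm.ext fun i l => ?_, fun i => if_pos rfl⟩
  simp only [Fmap, of_apply, eq_comm (a := i), edgeAdj_comm Ind l i]

lemma Fmap_fst_apply (β : ℝ × ℝ × ℝ) (i l : Fin n) :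
    (Fmap Ind β).1 i l =
      β.2.1 + (if edgeAdj Ind i l then β.1 - β.2.1 else 0) - if i = l then β.2.1 else 0 := by
  rcases eq_or_ne i l with rfl | h
  · simp [Fmap, not_edgeAdj_self]
  · simp only [Fmap, of_apply, if_neg h]
    split_ifs <;> ring

lemma sum_Fmap_fst_row (β : ℝ × ℝ × ℝ) (s : Finset (Fin n)) (j : Fin n) :
    ∑ l ∈ s, (Fmap Ind β).1 j l =
      β.2.1 * #s + (β.1 - β.2.1) * #{l ∈ s | edgeAdj Ind j l} -
        if j ∈ s then β.2.1 else 0 := by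
  simp only [Fmap_fst_apply, sum_sub_distrib, sum_add_distrib, sum_ite_eq, sum_const, sum_ite,
    nsmul_eq_mul]
  ring

lemma Fmap_fst_mul_self (β : ℝ × ℝ × ℝ) (i l : Fin n) :
    (Fmap Ind β).1 i l * (Fmap Ind β).1 i l =
      (Fmap Ind (β.1 ^ 2, β.2.1 ^ 2, β.2.2)).1 i l := by
  simp only [Fmap, of_apply]
  split_ifs <;> ring

theorem pInner_Fmap_self (β : ℝ × ℝ × ℝ) :
    pInner (Fmap Ind β) (Fmap Ind β) =
      n * (β.2.1 ^ 2 * (n - 1) + (β.1 ^ 2 - β.2.1 ^ 2) * (2 * (v - 2) : ℕ) + β.2.2 ^ 2) := by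
  simp only [pInner, Fmap_fst_mul_self, sum_Fmap_fst_row, card_univ, Fintype.card_fin,
    card_filter_edgeAdj, mem_univ, if_true]
  simp only [Fmap, sum_sub_distrib, sum_const, card_univ, Fintype.card_fin, nsmul_eq_mul]
  ring

noncomputable def cliqueGap (β₁ β₂ : ℝ) (k m : ℕ) : ℝ :=
  (1 - 2 * if m = 2 then 1 else 0) *
    (β₂ * k.choose 2 + (β₁ - β₂) * (m * (k - m) : ℕ) - if m = 2 then β₂ else 0)

lemma cliqueRep_eq_indicator (K : Finset (Fin v)) :
    cliqueRep Ind K = fun l => if pairFinset Ind l ⊆ K then 1 else 0 := by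
  ext l
  simp [cliqueRep, subset_iff, pairFinset_eq_toFinset]

lemma pairFinset_subset_iff_card_inter_eq_two (K : Finset (Fin v)) (j : Fin n) :
    pairFinset Ind j ⊆ K ↔ #(pairFinset Ind j ∩ K) = 2 := by
  rw [← card_pairFinset Ind j, ← inter_eq_left]
  exact ⟨fun h => by rw [h], fun h => eq_of_subset_of_card_le inter_subset_left h.ge⟩

theorem energy_flip_cliqueRep_sub (β₁ β₂ : ℝ) (K : Finset (Fin v)) (j : Fin n) :
    energy (flip (cliqueRep Ind K) j) (Fmap Ind (β₁, β₂, 0)) -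
        energy (cliqueRep Ind K) (Fmap Ind (β₁, β₂, 0)) =
      cliqueGap β₁ β₂ #K #(pairFinset Ind j ∩ K) := by
  have hrow : ((Fmap Ind (β₁, β₂, 0)).1 *ᵥ cliqueRep Ind K) j =
      ∑ l ∈ {l | pairFinset Ind l ⊆ K}, (Fmap Ind (β₁, β₂, 0)).1 j l := by
    simp [mulVec, dotProduct, cliqueRep_eq_indicator, sum_filter]
  have hadj : #{l ∈ {l | pairFinset Ind l ⊆ K} | edgeAdj Ind j l} =
      #(pairFinset Ind j ∩ K) * (#K - #(pairFinset Ind j ∩ K)) := by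
    rw [filter_filter, card_filter_pairFinset_subset_edgeAdj, card_sdiff, inter_comm]
  rw [energy_flip_sub_energy (Fmap_isHopfieldParam Ind _), hrow, sum_Fmap_fst_row, hadj,
    card_filter_pairFinset_subset]
  simp [cliqueGap, cliqueRep_eq_indicator, pairFinset_subset_iff_card_inter_eq_two, Fmap]

end Edges

lemma one_le_cliqueGap {k m : ℕ} (hk : 16 ≤ k) (hm : m ≤ 2) :
    1 ≤ cliqueGap (-5 / k) (14 / k ^ 2) k m := by
  have hkR : (16 : ℝ) ≤ k := by exact_mod_cast hk
  have hk0 : (k : ℝ) ≠ 0 := by positivity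
  interval_cases m <;>
    simp only [cliqueGap, Nat.cast_choose_two, Nat.cast_mul, Nat.cast_sub (by omega : 1 ≤ k),
      Nat.cast_sub (by omega : 2 ≤ k)] <;> norm_num <;> field_simp <;> nlinarith

theorem pInner_Fmap_le (Ind : EdgeIdx v ≃ Fin n) (hv : 2 ≤ v) {c : ℝ} (hc : 0 < c) :
    pInner (Fmap Ind (-5 / (c * v), 14 / (c * v) ^ 2, 0))
        (Fmap Ind (-5 / (c * v), 14 / (c * v) ^ 2, 0)) ≤
      (196 * c⁻¹ ^ 4 + 50 * c⁻¹ ^ 2) * v := by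
  obtain rfl := eq_choose_two_of_equiv Ind
  have hvR : (2 : ℝ) ≤ v := by exact_mod_cast hv
  have hv0 : (0 : ℝ) < v := by linarith
  rw [pInner_Fmap_self, Nat.cast_choose_two, Nat.cast_mul, Nat.cast_sub hv]
  set N : ℝ := v * (v - 1) / 2
  have hN₁ : N * (N - 2 * v + 3) / v ^ 4 ≤ v := by
    rw [div_le_iff₀ (by positivity)]
    simp only [N]
    nlinarith [pow_pos hv0 3, pow_pos hv0 4]
  have hN₂ : N * (v - 2) / v ^ 2 ≤ v := by
    rw [div_le_iff₀ (by positivity)]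
    simp only [N]
    nlinarith [pow_pos hv0 3]
  calc _ = 196 * c⁻¹ ^ 4 * (N * (N - 2 * v + 3) / v ^ 4) +
          50 * c⁻¹ ^ 2 * (N * (v - 2) / v ^ 2) := by
        push_cast
        field_simp
        ring
    _ ≤ 196 * c⁻¹ ^ 4 * v + 50 * c⁻¹ ^ 2 * v := by gcongr
    _ = _ := by ring

/-- With `θ = F(−5/k, 14/k², 0)` and `16 ≤ k ≤ v`:
(1) all energy gaps on `C_{v,k}` are at least 1, and
(2) if `k = c·v` with `c ∈ (0,1]` then `‖θ‖² ≤ (196·c⁻⁴ + 50·c⁻²)·v`. -/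
theorem Fmap_clique_lowNorm {v n : ℕ} (Ind : EdgeIdx v ≃ Fin n) (k : ℕ)
    (hk : 16 ≤ k) (hkv : k ≤ v) (θ : Param n)
    (hθ : θ = Fmap Ind (-5 / (k : ℝ), 14 / (k : ℝ) ^ 2, 0)) :
    (∀ x ∈ CliqueReps Ind k, ∀ j : Fin n,
        energy (flip x j) θ - energy x θ ≥ 1) ∧
    (∀ c : ℝ, 0 < c → c ≤ 1 → (k : ℝ) = c * v →
        pInner θ θ ≤ (196 * c⁻¹ ^ 4 + 50 * c⁻¹ ^ 2) * v) := by
  subst hθ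
  refine ⟨?_, fun c hc _ hkc => ?_⟩
  · rintro x ⟨K, hK, rfl⟩ j
    rw [ge_iff_le, energy_flip_cliqueRep_sub, hK]
    exact one_le_cliqueGap hk
      ((Finset.card_le_card Finset.inter_subset_left).trans (card_pairFinset Ind j).le)
  · rw [hkc]
    exact pInner_Fmap_le Ind (by omega) hc

end HopfieldPaper
end

section
/- Let Γ be a finite subgroup of the group of n×n permutation matrices, let x₀ ∈ {0,1}ⁿ, and let O = Orb(x₀, Γ). Suppose the set K = {θ : E(x^{(j)}; θ) − E(x; θ) ≥ 1 for all x ∈ O and all j ∈ {1,…,n}} of Hopfield parameters is nonempty. Then the minimizer θ* of ‖θ‖² = ‖W‖_F² + ‖b‖² over K exists, is unique, and is Γ-invariant: θ* ∈ Ψ(Γ). -/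
open scoped BigOperators
open scoped Classical
open Matrix MeasureTheory

/-! The constraint set `K` is the intersection of the linear subspace of Hopfield parameters with
closed half-spaces, one for each energy-gap constraint (the gap is linear in `θ`), so it is closed
and convex. In the Euclidean norm `‖W‖_F² + ‖b‖²`, which is strictly convex, such a set has exactly
one point of minimal norm. Every `σ ∈ Γ` maps the orbit to itself and conjugates flips
(`x^{(j)} ∘ σ = (x ∘ σ)^{(σ⁻¹ j)}`), so `θ ↦ σθ` preserves `K` and the norm; it therefore sends
the minimizer to a minimizer, which must be the minimizer itself. -/

section MinimalNorm

variable {E : Type*} [NormedAddCommGroup E] {K : Set E}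

theorem IsClosed.exists_norm_le [ProperSpace E] (hK : IsClosed K) (hne : K.Nonempty) :
    ∃ v ∈ K, ∀ w ∈ K, ‖v‖ ≤ ‖w‖ := by
  obtain ⟨v, hvK, hv⟩ := hK.exists_infDist_eq_dist hne 0
  refine ⟨v, hvK, fun w hw => ?_⟩
  simpa [hv] using Metric.infDist_le_dist_of_mem hw (x := (0 : E))

theorem Convex.eq_of_norm_le [NormedSpace ℝ E] [StrictConvexSpace ℝ E] (hK : Convex ℝ K) {v w : E}
    (hv : v ∈ K ∧ ∀ u ∈ K, ‖v‖ ≤ ‖u‖) (hw : w ∈ K ∧ ∀ u ∈ K, ‖w‖ ≤ ‖u‖) : v = w := by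
  by_contra hne
  have hmid : (1 / 2 : ℝ) • v + (1 / 2 : ℝ) • w ∈ K :=
    hK hv.1 hw.1 (by norm_num) (by norm_num) (by norm_num)
  have hlt : ‖(1 / 2 : ℝ) • v + (1 / 2 : ℝ) • w‖ < ‖v‖ :=
    norm_combo_lt_of_ne le_rfl (hw.2 v hv.1) hne (by norm_num) (by norm_num) (by norm_num)
  exact (hv.2 _ hmid).not_gt hlt

theorem Convex.existsUnique_norm_le [NormedSpace ℝ E] [ProperSpace E] [StrictConvexSpace ℝ E]
    (hconv : Convex ℝ K) (hclosed : IsClosed K) (hne : K.Nonempty) :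
    ∃! v, v ∈ K ∧ ∀ w ∈ K, ‖v‖ ≤ ‖w‖ := by
  obtain ⟨v, hvK, hv⟩ := hclosed.exists_norm_le hne
  exact ⟨v, ⟨hvK, hv⟩, fun _ hw => hconv.eq_of_norm_le hw ⟨hvK, hv⟩⟩

end MinimalNorm

namespace HopfieldPaper

variable {n : ℕ}

/- `Param n` carries the sup norm, which is not strictly convex; `pInner` is the Euclidean
structure in these coordinates. -/
noncomputable def paramEuclidean (n : ℕ) :
    Param n ≃ₗ[ℝ] EuclideanSpace ℝ ((Fin n × Fin n) ⊕ Fin n) where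
  toFun θ := WithLp.toLp 2 (Sum.elim (fun p => θ.1 p.1 p.2) θ.2)
  map_add' θ η := by ext (_ | _) <;> rfl
  map_smul' a θ := by ext (_ | _) <;> rfl
  invFun v := (Matrix.of fun i j => v (Sum.inl (i, j)), fun j => v (Sum.inr j))
  left_inv θ := rfl
  right_inv v := by ext (_ | _) <;> rfl

theorem pInner_self_eq_norm_sq (θ : Param n) : pInner θ θ = ‖paramEuclidean n θ‖ ^ 2 := by
  rw [EuclideanSpace.real_norm_sq_eq, Fintype.sum_sum_type, Fintype.sum_prod_type]
  simp only [sq]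
  rfl

theorem pInner_self_le_iff {θ η : Param n} :
    pInner θ θ ≤ pInner η η ↔ ‖paramEuclidean n θ‖ ≤ ‖paramEuclidean n η‖ := by
  rw [pInner_self_eq_norm_sq, pInner_self_eq_norm_sq]
  exact pow_le_pow_iff_left₀ (norm_nonneg _) (norm_nonneg _) two_ne_zero

theorem existsUnique_pInner_le {K : Set (Param n)} (hconv : Convex ℝ K) (hclosed : IsClosed K)
    (hne : K.Nonempty) : ∃! θ, θ ∈ K ∧ ∀ η ∈ K, pInner θ θ ≤ pInner η η := by
  let e := paramEuclidean n
  have he : Continuous e.symm := LinearMap.continuous_of_finiteDimensional _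
  rw [e.toEquiv.existsUnique_congr (q := fun v => v ∈ e.symm ⁻¹' K ∧ ∀ w ∈ e.symm ⁻¹' K, ‖v‖ ≤ ‖w‖)]
  · exact (hconv.linear_preimage e.symm.toLinearMap).existsUnique_norm_le (hclosed.preimage he)
      (hne.preimage e.symm.surjective)
  · intro θ
    simp only [Set.mem_preimage]
    rw [e.surjective.forall]
    simp [e, pInner_self_le_iff]

def hopfieldSubmodule (n : ℕ) : Submodule ℝ (Param n) where
  carrier := {θ | IsHopfieldParam θ}
  add_mem' hθ hη := ⟨hθ.1.add hη.1, fun i => by simp [hθ.2 i, hη.2 i]⟩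
  zero_mem' := ⟨Matrix.isSymm_zero, fun _ => rfl⟩
  smul_mem' c _ hθ := ⟨hθ.1.smul c, fun i => by simp [hθ.2 i]⟩

theorem mem_hopfieldSubmodule {θ : Param n} : θ ∈ hopfieldSubmodule n ↔ IsHopfieldParam θ :=
  Iff.rfl

theorem energy_add (x : Fin n → ℝ) (θ η : Param n) :
    energy x (θ + η) = energy x θ + energy x η := by
  simp only [energy, Prod.fst_add, Prod.snd_add, Matrix.add_apply, Pi.add_apply, mul_add,
    add_mul, Finset.sum_add_distrib]
  ring

theorem energy_smul (x : Fin n → ℝ) (c : ℝ) (θ : Param n) :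
    energy x (c • θ) = c * energy x θ := by
  have hW : ∀ i k, x i * (c * θ.1 i k) * x k = c * (x i * θ.1 i k * x k) := fun _ _ => by ring
  have hb : ∀ k, c * θ.2 k * x k = c * (θ.2 k * x k) := fun _ => mul_assoc _ _ _
  simp only [energy, Prod.smul_fst, Prod.smul_snd, Matrix.smul_apply, Pi.smul_apply,
    smul_eq_mul, hW, hb, ← Finset.mul_sum]
  ring

@[simps]
noncomputable def energyGap (x : Fin n → ℝ) (j : Fin n) : Param n →ₗ[ℝ] ℝ where
  toFun θ := energy (flip x j) θ - energy x θ
  map_add' θ η := by simp only [energy_add]; ring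
  map_smul' c θ := by simp only [energy_smul, RingHom.id_apply, smul_eq_mul]; ring

def memorizingSet (O : Set (Fin n → ℝ)) : Set (Param n) :=
  {θ | IsHopfieldParam θ ∧ ∀ x ∈ O, ∀ j, energy (flip x j) θ - energy x θ ≥ 1}

theorem memorizingSet_eq_inter (O : Set (Fin n → ℝ)) :
    memorizingSet O = (hopfieldSubmodule n : Set (Param n)) ∩
      ⋂ x ∈ O, ⋂ j, {θ | 1 ≤ energyGap x j θ} := by
  ext θ
  simp [memorizingSet, mem_hopfieldSubmodule]

theorem convex_memorizingSet (O : Set (Fin n → ℝ)) : Convex ℝ (memorizingSet O) := by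
  rw [memorizingSet_eq_inter]
  exact (Submodule.convex _).inter <| convex_iInter₂ fun x _ => convex_iInter fun j =>
    convex_halfSpace_ge (energyGap x j).isLinear 1

theorem isClosed_memorizingSet (O : Set (Fin n → ℝ)) : IsClosed (memorizingSet O) := by
  rw [memorizingSet_eq_inter]
  exact (Submodule.closed_of_finiteDimensional _).inter <| isClosed_biInter fun x _ =>
    isClosed_iInter fun j =>
      isClosed_le continuous_const (energyGap x j).continuous_of_finiteDimensional

theorem permAct_fst_apply (σ : Equiv.Perm (Fin n)) (θ : Param n) (i j : Fin n) :
    (permAct σ θ).1 i j = θ.1 (σ⁻¹ i) (σ⁻¹ j) := by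
  simp [permAct, Matrix.transpose_permMatrix, Equiv.Perm.permMatrix,
    PEquiv.toMatrix_toPEquiv_mul, PEquiv.mul_toMatrix_toPEquiv]

theorem permAct_snd_apply (σ : Equiv.Perm (Fin n)) (θ : Param n) (i : Fin n) :
    (permAct σ θ).2 i = θ.2 (σ⁻¹ i) := by
  simp [permAct, Matrix.permMatrix_mulVec]

theorem energy_permAct (σ : Equiv.Perm (Fin n)) (θ : Param n) (x : Fin n → ℝ) :
    energy x (permAct σ θ) = energy (x ∘ σ) θ := by
  simp only [energy, permAct_fst_apply, permAct_snd_apply, Function.comp_apply]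
  congr 1
  · congr 1
    exact Fintype.sum_equiv σ⁻¹ _ _ fun i => Fintype.sum_equiv σ⁻¹ _ _ fun j => by simp
  · exact Fintype.sum_equiv σ⁻¹ _ _ fun i => by simp

theorem pInner_permAct_self (σ : Equiv.Perm (Fin n)) (θ : Param n) :
    pInner (permAct σ θ) (permAct σ θ) = pInner θ θ := by
  simp only [pInner, permAct_fst_apply, permAct_snd_apply]
  congr 1
  · exact Fintype.sum_equiv σ⁻¹ _ _ fun i => Fintype.sum_equiv σ⁻¹ _ _ fun j => rfl
  · exact Fintype.sum_equiv σ⁻¹ _ _ fun i => rfl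

theorem flip_comp (x : Fin n → ℝ) (j : Fin n) (σ : Equiv.Perm (Fin n)) :
    flip x j ∘ σ = flip (x ∘ σ) (σ⁻¹ j) := by
  simp [flip, Function.update_comp_equiv, Equiv.Perm.inv_def]

theorem IsHopfieldParam.permAct {θ : Param n} (h : IsHopfieldParam θ) (σ : Equiv.Perm (Fin n)) :
    IsHopfieldParam (permAct σ θ) :=
  ⟨Matrix.IsSymm.ext fun i j => by simp only [permAct_fst_apply, h.1.apply],
    fun i => by rw [permAct_fst_apply, h.2]⟩

theorem permAct_mem_memorizingSet {O : Set (Fin n → ℝ)} {σ : Equiv.Perm (Fin n)}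
    (hO : ∀ x ∈ O, x ∘ σ ∈ O) {θ : Param n} (hθ : θ ∈ memorizingSet O) :
    permAct σ θ ∈ memorizingSet O := by
  refine ⟨hθ.1.permAct σ, fun x hx j => ?_⟩
  rw [energy_permAct, energy_permAct, flip_comp]
  exact hθ.2 _ (hO x hx) _

theorem comp_mem_orb {Γ : Subgroup (Equiv.Perm (Fin n))} {σ : Equiv.Perm (Fin n)} (hσ : σ ∈ Γ)
    {x₀ x : Fin n → ℝ} (hx : x ∈ orb (Γ : Set (Equiv.Perm (Fin n))) x₀) :
    x ∘ σ ∈ orb (Γ : Set (Equiv.Perm (Fin n))) x₀ := by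
  obtain ⟨τ, hτ, rfl⟩ := hx
  exact ⟨τ * σ, Γ.mul_mem hτ hσ, by
    rw [Matrix.permMatrix_mulVec, Matrix.permMatrix_mulVec]
    rfl⟩

theorem min_norm_orbit_memorizer_invariant_general {n : ℕ}
    (Γ : Subgroup (Equiv.Perm (Fin n))) (x₀ : Fin n → ℝ)
    (K : Set (Param n))
    (hK : K = {θ : Param n | IsHopfieldParam θ ∧
      ∀ x ∈ orb (Γ : Set (Equiv.Perm (Fin n))) x₀,
        ∀ j : Fin n, energy (flip x j) θ - energy x θ ≥ 1})
    (hne : K.Nonempty) :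
    (∃! θstar : Param n,
        θstar ∈ K ∧ ∀ θ ∈ K, pInner θstar θstar ≤ pInner θ θ) ∧
    (∀ θstar : Param n,
        (θstar ∈ K ∧ ∀ θ ∈ K, pInner θstar θstar ≤ pInner θ θ) →
        InvariantUnder (Γ : Set (Equiv.Perm (Fin n))) θstar) := by
  change K = memorizingSet _ at hK
  subst hK
  have hmin := existsUnique_pInner_le (convex_memorizingSet _) (isClosed_memorizingSet _) hne
  refine ⟨hmin, fun θ hθ σ hσ => hmin.unique ⟨?_, fun η hη => ?_⟩ hθ⟩
  · exact permAct_mem_memorizingSet (fun x hx => comp_mem_orb hσ hx) hθ.1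
  · exact (pInner_permAct_self σ θ).trans_le (hθ.2 η hη)

/-- Over the (nonempty) set `K` of Hopfield parameters with
all orbit energy gaps at least 1, the minimizer of `‖θ‖² = ‖W‖_F² + ‖b‖²`
exists, is unique, and is Γ-invariant. -/
theorem min_norm_orbit_memorizer_invariant {n : ℕ}
    (Γ : Subgroup (Equiv.Perm (Fin n))) (x₀ : Fin n → ℝ) (hx₀ : IsBinary x₀)
    (K : Set (Param n))
    (hK : K = {θ : Param n | IsHopfieldParam θ ∧
      ∀ x ∈ orb (Γ : Set (Equiv.Perm (Fin n))) x₀,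
        ∀ j : Fin n, energy (flip x j) θ - energy x θ ≥ 1})
    (hne : K.Nonempty) :
    (∃! θstar : Param n,
        θstar ∈ K ∧ ∀ θ ∈ K, pInner θstar θstar ≤ pInner θ θ) ∧
    (∀ θstar : Param n,
        (θstar ∈ K ∧ ∀ θ ∈ K, pInner θstar θstar ≤ pInner θ θ) →
        InvariantUnder (Γ : Set (Equiv.Perm (Fin n))) θstar) :=
  min_norm_orbit_memorizer_invariant_general Γ x₀ K hK hne

end HopfieldPaper
end

section
/- For every x ∈ {0,1}ⁿ and every j ∈ {1,…,n}, the representer vectors satisfy ‖u_j(x)‖² = (‖x‖₀ − x_j)/2 + 1, and the averaged representer satisfies ‖ū(x)‖² ≤ ‖x‖₀/2 + 1. -/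
open scoped BigOperators
open scoped Classical
open Matrix MeasureTheory

namespace HopfieldPaper

variable {n : ℕ}

/-- The averaged representer `ū(x) = (1/n)·Σ_{j=1}^n u_j(x)`. -/
noncomputable def ubar (x : Fin n → ℝ) : Param n :=
  (n : ℝ)⁻¹ • ∑ j, uvec x j

lemma sum_eq_l0 (x : Fin n → ℝ) (hx : IsBinary x) : ∑ i, x i = (l0norm x : ℝ) := by
  unfold l0norm
  rw [← Finset.sum_filter_ne_zero]
  rw [Finset.card_eq_sum_ones]
  push_cast
  refine Finset.sum_congr rfl fun i hi => ?_
  simp only [Finset.mem_filter] at hi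
  rcases hx i with h | h
  · exact absurd h hi.2
  · simp [h]

lemma uvec_sq (x : Fin n → ℝ) (hx : IsBinary x) (j : Fin n) :
    pInner (uvec x j) (uvec x j) = ((l0norm x : ℝ) - x j) / 2 + 1 := by
  have hc : (1 - 2 * x j) * (1 - 2 * x j) = 1 := by
    rcases hx j with h | h <;> rw [h] <;> ring
  have hxsq : ∀ i, x i * x i = x i := fun i => by rcases hx i with h | h <;> rw [h] <;> ring
  unfold pInner uvec
  simp only [Matrix.of_apply]
  have hmat : ∀ i l : Fin n,
      (if i = j ∧ l ≠ j then (1 - 2 * x j) * x l / 2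
       else if l = j ∧ i ≠ j then (1 - 2 * x j) * x i / 2 else 0) *
      (if i = j ∧ l ≠ j then (1 - 2 * x j) * x l / 2
       else if l = j ∧ i ≠ j then (1 - 2 * x j) * x i / 2 else 0)
      = (if i = j then (x l / 4 - if l = j then x j / 4 else 0) else 0)
        + (if l = j then (x i / 4 - if i = j then x j / 4 else 0) else 0) := by
    intro i l
    by_cases hi : i = j <;> by_cases hl : l = j <;> simp [hi, hl] <;>
      nlinarith [hc, hxsq l, hxsq i]
  simp only [hmat]
  have hg : ∑ t, (x t / 4 - if t = j then x j / 4 else 0) = (∑ t, x t) / 4 - x j / 4 := by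
    rw [Finset.sum_sub_distrib, Finset.sum_ite_eq' Finset.univ j, if_pos (Finset.mem_univ j),
      Finset.sum_div]
  have h1 : ∀ (g : Fin n → ℝ), ∑ i : Fin n, ∑ l : Fin n,
      ((if i = j then g l else 0) + (if l = j then g i else 0)) = 2 * ∑ t, g t := by
    intro g
    simp only [Finset.sum_add_distrib]
    have e1 : ∀ i : Fin n, ∑ l, (if i = j then g l else 0) = if i = j then ∑ t, g t else 0 :=
      fun i => by split <;> simp
    rw [Finset.sum_congr rfl fun i _ => e1 i]
    simp [Finset.sum_ite_eq']
    ring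
  rw [h1, hg]
  simp only [ite_mul, mul_ite, mul_zero, zero_mul, Finset.sum_ite_eq', Finset.mem_univ,
    if_true, hc]
  rw [sum_eq_l0 x hx]
  ring

lemma key_cs (f : Fin n → ℝ) : (∑ j, f j) * (∑ j, f j) ≤ (n : ℝ) * ∑ j, f j * f j := by
  have h := sq_sum_le_card_mul_sum_sq (s := (Finset.univ : Finset (Fin n))) (f := f)
  simpa [sq, Finset.card_univ] using h

/-- `‖u_j(x)‖² = (‖x‖₀ − x_j)/2 + 1` and
`‖ū(x)‖² ≤ ‖x‖₀/2 + 1` for every binary `x` and every `j`. -/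
theorem uvec_normSq {n : ℕ} (x : Fin n → ℝ) (hx : IsBinary x) :
    (∀ j : Fin n,
      pInner (uvec x j) (uvec x j) = ((l0norm x : ℝ) - x j) / 2 + 1) ∧
    pInner (ubar x) (ubar x) ≤ (l0norm x : ℝ) / 2 + 1 := by
  refine ⟨uvec_sq x hx, ?_⟩
  rcases Nat.eq_zero_or_pos n with hn | hn
  · subst hn
    simp [ubar, pInner]
    positivity
  have hN : (0 : ℝ) < n := by exact_mod_cast hn
  have hNne : (n : ℝ) ≠ 0 := ne_of_gt hN
  set L : ℝ := (l0norm x : ℝ) with hL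
  have hL0 : 0 ≤ L := by positivity
  set S : Param n := ∑ j, uvec x j with hS
  have hSfst : ∀ i l, S.1 i l = ∑ j, (uvec x j).1 i l := by
    intro i l
    rw [hS, Prod.fst_sum, Matrix.sum_apply]
  have hSsnd : ∀ l, S.2 l = ∑ j, (uvec x j).2 l := by
    intro l
    rw [hS, Prod.snd_sum, Finset.sum_apply]
  have hub : pInner (ubar x) (ubar x) = (n : ℝ)⁻¹ * (n : ℝ)⁻¹ * pInner S S := by
    unfold ubar pInner
    simp only [Prod.smul_fst, Prod.smul_snd, Matrix.smul_apply, Pi.smul_apply, smul_eq_mul,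
      ← hS]
    have e : ∀ a : ℝ, ((n : ℝ)⁻¹ * a) * ((n : ℝ)⁻¹ * a) = (n : ℝ)⁻¹ * (n : ℝ)⁻¹ * (a * a) :=
      fun a => by ring
    simp_rw [e, ← Finset.mul_sum]
    ring
  have hCS : pInner S S ≤ (n : ℝ) * ∑ j, pInner (uvec x j) (uvec x j) := by
    unfold pInner
    simp only [hSfst, hSsnd]
    calc (∑ i, ∑ l, (∑ j, (uvec x j).1 i l) * (∑ j, (uvec x j).1 i l))
          + ∑ l, (∑ j, (uvec x j).2 l) * (∑ j, (uvec x j).2 l)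
        ≤ (∑ i, ∑ l, (n : ℝ) * ∑ j, (uvec x j).1 i l * (uvec x j).1 i l)
          + ∑ l, (n : ℝ) * ∑ j, (uvec x j).2 l * (uvec x j).2 l := by
          refine add_le_add (Finset.sum_le_sum fun i _ => Finset.sum_le_sum fun l _ => ?_)
            (Finset.sum_le_sum fun l _ => ?_) <;> exact key_cs _
      _ = (n : ℝ) * ∑ j, ((∑ i, ∑ l, (uvec x j).1 i l * (uvec x j).1 i l)
          + ∑ l, (uvec x j).2 l * (uvec x j).2 l) := by
          simp_rw [← Finset.mul_sum]
          rw [← mul_add]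
          congr 1
          rw [Finset.sum_add_distrib]
          congr 1
          · conv_rhs => rw [Finset.sum_comm]
            exact Finset.sum_congr rfl fun i _ => Finset.sum_comm
          · exact Finset.sum_comm
  have hsum : ∑ j, pInner (uvec x j) (uvec x j) = (n : ℝ) * (L / 2 + 1) - L / 2 := by
    have e : ∀ j, pInner (uvec x j) (uvec x j) = (L / 2 + 1) - x j / 2 := by
      intro j; rw [uvec_sq x hx j]; ring
    simp_rw [e]
    rw [Finset.sum_sub_distrib, Finset.sum_const, ← Finset.sum_div, sum_eq_l0 x hx,
      Finset.card_univ, Fintype.card_fin, nsmul_eq_mul]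
  have step : pInner (ubar x) (ubar x)
      ≤ (n : ℝ)⁻¹ * (n : ℝ)⁻¹ * ((n : ℝ) * ((n : ℝ) * (L / 2 + 1) - L / 2)) := by
    rw [hub]
    have := mul_le_mul_of_nonneg_left hCS (by positivity : (0:ℝ) ≤ (n : ℝ)⁻¹ * (n : ℝ)⁻¹)
    rw [hsum] at this
    exact this
  have heq : (n : ℝ)⁻¹ * (n : ℝ)⁻¹ * ((n : ℝ) * ((n : ℝ) * (L / 2 + 1) - L / 2))
      = L / 2 + 1 - L / (2 * n) := by
    field_simp
  rw [heq] at step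
  have : 0 ≤ L / (2 * n) := by positivity
  linarith


end HopfieldPaper
end
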